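/- arXiv:2506.20753 — 3 statements merged into one kernel-verified Lean document; each statement's English description precedes it below -/
import Mathlib

section
/- For every finite reflexive graph G and every positive integer s, the speed-(s,s) cop number of G equals the ordinary cop number of the s-th power of G: c_{s,s}(G) = c(G^s). -/
open SimpleGraph

variable {V : Type*}

/-- A cop of speed `s` may move from `u` to `v` by traversing at most `s` edges. -/
def copStep (G : SimpleGraph V) (s : ℕ) (u v : V) : Prop :=
  ∃ p : G.Walk u v, p.length ≤ s

/-- A robber of speed `s` may move from `u` to `v` by traversing at most `s` edges,
never passing through a vertex of `S` (the set of vertices occupied by cops). -/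
def robberStep (G : SimpleGraph V) (s : ℕ) (S : Set V) (u v : V) : Prop :=
  ∃ p : G.Walk u v, p.length ≤ s ∧ ∀ x ∈ p.support.tail, x ∉ S

/-- `CanCatch G sc sr n cops r` : cops (of speed `sc`) at positions `cops`, robber
(of speed `sr`) at `r`, cops about to move; the cops can force a capture within
`n` further rounds. -/
def CanCatch (G : SimpleGraph V) (sc sr : ℕ) {k : ℕ} : ℕ → (Fin k → V) → V → Prop
  | 0, cops, r => ∃ i, cops i = r
  | n + 1, cops, r => (∃ i, cops i = r) ∨
      ∃ cops' : Fin k → V, (∀ i, copStep G sc (cops i) (cops' i)) ∧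
        ((∃ i, cops' i = r) ∨
          ∀ r', robberStep G sr {x | ∃ i, cops' i = x} r r' →
            CanCatch G sc sr n cops' r')

/-- The speed-`(sc, sr)` cop number of `G`: the least number `k` of cops which have
a winning strategy when the cops move with speed `sc` and the robber with speed `sr`.
The ordinary cop number is `copNumber G 1 1`. -/
noncomputable def copNumber (G : SimpleGraph V) (sc sr : ℕ) : ℕ :=
  sInf {k : ℕ | ∃ cops : Fin k → V, ∀ r : V, ∃ n : ℕ, CanCatch G sc sr n cops r}

/-- The `s`-th power of `G` : distinct vertices are adjacent iff their distance
in `G` is at most `s`. -/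
def graphPow (G : SimpleGraph V) (s : ℕ) : SimpleGraph V where
  Adj u v := u ≠ v ∧ ∃ p : G.Walk u v, p.length ≤ s
  symm := by
    refine ⟨?_⟩
    rintro u v ⟨h, p, hp⟩
    exact ⟨h.symm, p.reverse, by simpa using hp⟩
  loopless := by refine ⟨?_⟩; rintro u ⟨h, -⟩; exact h rfl


lemma copStep_iff (G : SimpleGraph V) (s : ℕ) (u v : V) :
    copStep G s u v ↔ copStep (graphPow G s) 1 u v := by
  constructor
  · rintro ⟨p, hp⟩
    by_cases h : u = v
    · subst h; exact ⟨Walk.nil, by simp⟩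
    · exact ⟨Walk.cons (show (graphPow G s).Adj u v from ⟨h, p, hp⟩) Walk.nil, by simp⟩
  · rintro ⟨q, hq⟩
    cases q with
    | nil => exact ⟨Walk.nil, by simp⟩
    | cons adj q' =>
      have h0 : q'.length = 0 := by
        simp only [Walk.length_cons] at hq; omega
      have := Walk.eq_of_length_eq_zero h0
      subst this
      obtain ⟨-, p, hp⟩ := adj
      exact ⟨p, hp⟩

lemma robberStep_pow {G : SimpleGraph V} {s : ℕ} {S : Set V} {u v : V}
    (h : robberStep G s S u v) : robberStep (graphPow G s) 1 S u v := by
  obtain ⟨p, hp, htail⟩ := h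
  by_cases h : u = v
  · subst h; exact ⟨Walk.nil, by simp, by simp⟩
  · refine ⟨Walk.cons (show (graphPow G s).Adj u v from ⟨h, p, hp⟩) Walk.nil, by simp, ?_⟩
    have hv : v ∈ p.support.tail := by
      have hmem := p.end_mem_support
      rw [p.support_eq_cons] at hmem
      rcases List.mem_cons.mp hmem with h' | h'
      · exact absurd h'.symm h
      · exact h'
    simpa using htail v hv

lemma canCatch_pow_to {k : ℕ} (G : SimpleGraph V) (s : ℕ) :
    ∀ (n : ℕ) (cops : Fin k → V) (r : V),
      CanCatch (graphPow G s) 1 1 n cops r → CanCatch G s s n cops r := by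
  intro n
  induction n with
  | zero => intro cops r h; exact h
  | succ n ih =>
    intro cops r h
    rcases h with h | ⟨cops', hstep, hrest⟩
    · exact Or.inl h
    · refine Or.inr ⟨cops', fun i => (copStep_iff G s _ _).mpr (hstep i), ?_⟩
      rcases hrest with h | hall
      · exact Or.inl h
      · exact Or.inr fun r' hr' => ih cops' r' (hall r' (robberStep_pow hr'))

lemma canCatch_to_pow {k : ℕ} (G : SimpleGraph V) (s : ℕ) :
    ∀ (n : ℕ) (cops : Fin k → V) (r : V),
      CanCatch G s s n cops r → CanCatch (graphPow G s) 1 1 (n + 1) cops r := by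
  intro n
  induction n with
  | zero => intro cops r h; exact Or.inl h
  | succ n ih =>
    intro cops r h
    rcases h with h | ⟨cops', hstep, hrest⟩
    · exact Or.inl h
    · refine Or.inr ⟨cops', fun i => (copStep_iff G s _ _).mp (hstep i), ?_⟩
      rcases hrest with h | hall
      · exact Or.inl h
      · refine Or.inr fun r' hr' => ?_
        -- extract a G-walk of length ≤ s from r to r'
        obtain ⟨p, hp⟩ := (copStep_iff G s r r').mpr ⟨hr'.choose, hr'.choose_spec.1⟩
        by_cases htail : ∀ x ∈ p.support.tail, x ∉ {x | ∃ i, cops' i = x}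
        · exact ih cops' r' (hall r' ⟨p, hp, htail⟩)
        · push_neg at htail
          obtain ⟨x, hx, i, hi⟩ := htail
          haveI := Classical.decEq V
          -- cop i is on the robber's path; it can capture at r' next move
          refine Or.inr ⟨Function.update cops' i r', fun j => ?_, Or.inl ⟨i, by simp⟩⟩
          by_cases hj : j = i
          · subst hj
            rw [Function.update_self, hi]
            exact (copStep_iff G s _ _).mp
              ⟨p.dropUntil x (List.mem_of_mem_tail hx), le_trans (p.length_dropUntil_le _) hp⟩
          · rw [Function.update_of_ne hj]
            exact ⟨Walk.nil, by simp⟩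

theorem statement0 [Fintype V] (G : SimpleGraph V) (s : ℕ) (hs : 0 < s) :
    copNumber G s s = copNumber (graphPow G s) 1 1 := by
  unfold copNumber
  congr 1
  ext k
  simp only [Set.mem_setOf_eq]
  constructor
  · rintro ⟨cops, h⟩
    refine ⟨cops, fun r => ?_⟩
    obtain ⟨n, hn⟩ := h r
    exact ⟨n + 1, canCatch_to_pow G s n cops r hn⟩
  · rintro ⟨cops, h⟩
    refine ⟨cops, fun r => ?_⟩
    obtain ⟨n, hn⟩ := h r
    exact ⟨n, canCatch_pow_to G s n cops r hn⟩
end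

section
/- For all integers n ≥ 4 and s ≥ 2, the graph K_{n−1}^{(s)} is a retract of K_n^{(s)}, where K_{n−1}^{(s)} is realized inside K_n^{(s)} as the subgraph obtained by deleting one branch vertex u together with all subdivision vertices lying on the subdivided edges incident to u. -/
open SimpleGraph

variable {V : Type*}

/-- Vertex set of the `s`-subdivision `G^{(s)}` of `G`: the branch vertices (`Sum.inl`)
together with, for each edge `uv` of `G` (recorded with `u < v`), the `s - 1`
subdivision vertices on the path replacing `uv` (`Sum.inr`, indexed from the `u` end). -/
def SubVert [LinearOrder V] (G : SimpleGraph V) (s : ℕ) : Type _ :=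
  V ⊕ {p : V × V × Fin (s - 1) // G.Adj p.1 p.2.1 ∧ p.1 < p.2.1}

/-- Adjacency in the `s`-subdivision of `G`. -/
def subdivAdj [LinearOrder V] (G : SimpleGraph V) (s : ℕ) :
    SubVert G s → SubVert G s → Prop
  | Sum.inl u, Sum.inl v => s = 1 ∧ G.Adj u v
  | Sum.inl w, Sum.inr ⟨(u, v, i), _⟩ =>
      (w = u ∧ (i : ℕ) = 0) ∨ (w = v ∧ (i : ℕ) = s - 2)
  | Sum.inr ⟨(u, v, i), _⟩, Sum.inl w =>
      (w = u ∧ (i : ℕ) = 0) ∨ (w = v ∧ (i : ℕ) = s - 2)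
  | Sum.inr ⟨(u, v, i), _⟩, Sum.inr ⟨(u', v', j), _⟩ =>
      u = u' ∧ v = v' ∧ ((i : ℕ) + 1 = (j : ℕ) ∨ (j : ℕ) + 1 = (i : ℕ))

/-- The `s`-subdivision `G^{(s)}` of `G`: every edge of `G` is replaced by a path
of length `s` (i.e. it is subdivided `s - 1` times). -/
def subdivGraph [LinearOrder V] (G : SimpleGraph V) (s : ℕ) :
    SimpleGraph (SubVert G s) where
  Adj := subdivAdj G s
  symm := by
    refine ⟨?_⟩
    rintro (u | ⟨⟨u, v, i⟩, h⟩) (w | ⟨⟨u', v', j⟩, h'⟩) hadj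
    · exact ⟨hadj.1, hadj.2.symm⟩
    · exact hadj
    · exact hadj
    · obtain ⟨h1, h2, h3⟩ := hadj
      exact ⟨h1.symm, h2.symm, h3.symm⟩
  loopless := by
    refine ⟨?_⟩
    rintro (u | ⟨⟨u, v, i⟩, h⟩) hadj
    · exact G.ne_of_adj hadj.2 rfl
    · rcases hadj with ⟨-, -, h3 | h3⟩ <;> omega

/-- `touchesBranch u x` : the vertex `x` of `K_n^{(s)}` is the branch vertex `u` itself,
or a subdivision vertex lying on a subdivided edge incident to `u`. -/
def touchesBranch (n s : ℕ) (u : Fin n) :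
    SubVert (⊤ : SimpleGraph (Fin n)) s → Prop
  | Sum.inl w => w = u
  | Sum.inr ⟨(a, b, _), _⟩ => a = u ∨ b = u

-- auxiliary: subdivision vertex on edge {p,q} at position j from p
def sv (n s : ℕ) (p q : Fin n) (j : ℕ) (hpq : p ≠ q) (hj : j < s - 1) :
    SubVert (⊤ : SimpleGraph (Fin n)) s :=
  if h : p < q then Sum.inr ⟨(p, q, ⟨j, hj⟩), ⟨by simpa using hpq, h⟩⟩
  else Sum.inr ⟨(q, p, ⟨s - 2 - j, by omega⟩),
    ⟨by simpa using hpq.symm, lt_of_le_of_ne (not_lt.1 h) hpq.symm⟩⟩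

lemma not_touches_sv (n s : ℕ) (u p q : Fin n) (j : ℕ) (hpq hj)
    (hp : p ≠ u) (hq : q ≠ u) : ¬ touchesBranch n s u (sv n s p q j hpq hj) := by
  unfold sv
  by_cases hlt : p < q
  · erw [dif_pos hlt]; simp [touchesBranch, hp, hq]
  · erw [dif_neg hlt]; simp [touchesBranch, hp, hq]

lemma sv_adj_succ (n s : ℕ) (p q : Fin n) (j k : ℕ) (hpq) (hj) (hk) (h : j + 1 = k) :
    (subdivGraph (⊤ : SimpleGraph (Fin n)) s).Adj (sv n s p q j hpq hj) (sv n s p q k hpq hk) := by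
  by_cases hlt : p < q
  · simp only [sv]; erw [dif_pos hlt, dif_pos hlt]
    exact ⟨rfl, rfl, Or.inl h⟩
  · simp only [sv]; erw [dif_neg hlt, dif_neg hlt]
    exact ⟨rfl, rfl, Or.inr (by simp; omega)⟩

lemma sv_adj_inl_left (n s : ℕ) (p q : Fin n) (hpq) (hj) :
    (subdivGraph (⊤ : SimpleGraph (Fin n)) s).Adj (Sum.inl p) (sv n s p q 0 hpq hj) := by
  by_cases hlt : p < q
  · simp only [sv]; erw [dif_pos hlt]
    exact Or.inl ⟨rfl, rfl⟩
  · simp only [sv]; erw [dif_neg hlt]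
    exact Or.inr ⟨rfl, by simp⟩

lemma sv_adj_inl_right (n s : ℕ) (p q : Fin n) (hpq) (hj) :
    (subdivGraph (⊤ : SimpleGraph (Fin n)) s).Adj (sv n s p q (s - 2) hpq hj) (Sum.inl q) := by
  by_cases hlt : p < q
  · simp only [sv]; erw [dif_pos hlt]
    exact Or.inr ⟨rfl, rfl⟩
  · simp only [sv]; erw [dif_neg hlt]
    exact Or.inl ⟨rfl, by simp⟩

lemma sv_adj_inl_left' (n s : ℕ) (p q : Fin n) (j : ℕ) (hpq) (hj) (hj0 : j = 0) :
    (subdivGraph (⊤ : SimpleGraph (Fin n)) s).Adj (Sum.inl p) (sv n s p q j hpq hj) := by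
  subst hj0; exact sv_adj_inl_left n s p q hpq hj

lemma sv_adj_inl_right' (n s : ℕ) (p q : Fin n) (j : ℕ) (hpq) (hj) (hjl : j = s - 2) :
    (subdivGraph (⊤ : SimpleGraph (Fin n)) s).Adj (sv n s p q j hpq hj) (Sum.inl q) := by
  subst hjl; exact sv_adj_inl_right n s p q hpq hj

def retr (n s : ℕ) (hs : 2 ≤ s) (u a : Fin n) :
    SubVert (⊤ : SimpleGraph (Fin n)) s → SubVert (⊤ : SimpleGraph (Fin n)) s
  | Sum.inl w => if w = u then Sum.inl a else Sum.inl w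
  | Sum.inr ⟨(x, y, i), h⟩ =>
    if hx : x = u then
      if hy : y = a then Sum.inl a
      else sv n s a y (i : ℕ) (Ne.symm hy) i.isLt
    else if hy : y = u then
      if hx2 : x = a then Sum.inl a
      else sv n s a x (s - 2 - (i : ℕ)) (Ne.symm hx2) (by omega)
    else Sum.inr ⟨(x, y, i), h⟩


/-- For `n ≥ 4` and `s ≥ 2`, the graph `K_{n-1}^{(s)}` — realized inside `K_n^{(s)}` as
the (induced) subgraph obtained by deleting the branch vertex `u` and all subdivision
vertices on subdivided edges incident to `u` — is a retract of `K_n^{(s)}`: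
there is a reflexive-graph homomorphism `φ` of `K_n^{(s)}` whose image avoids the
deleted vertices and which fixes every remaining vertex. -/
theorem statement5 (n s : ℕ) (hn : 4 ≤ n) (hs : 2 ≤ s) (u : Fin n) :
    ∃ φ : SubVert (⊤ : SimpleGraph (Fin n)) s → SubVert (⊤ : SimpleGraph (Fin n)) s,
      (∀ x, ¬ touchesBranch n s u (φ x)) ∧
      (∀ x, ¬ touchesBranch n s u x → φ x = x) ∧
      (∀ x y, (subdivGraph (⊤ : SimpleGraph (Fin n)) s).Adj x y →
        φ x = φ y ∨ (subdivGraph (⊤ : SimpleGraph (Fin n)) s).Adj (φ x) (φ y)) := by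
  haveI : Nontrivial (Fin n) := Fin.nontrivial_iff_two_le.mpr (by omega)
  obtain ⟨a, ha⟩ := exists_ne u
  refine ⟨retr n s hs u a, ?_, ?_, ?_⟩
  · rintro (w | ⟨⟨x, y, i⟩, h⟩)
    · simp only [retr]
      by_cases hw : w = u
      · erw [if_pos hw]; simp [touchesBranch, ha]
      · erw [if_neg hw]; simp [touchesBranch, hw]
    · simp only [retr]
      split
      · next hx =>
        by_cases hy : y = a
        · erw [dif_pos hy]; simp [touchesBranch, ha]
        · erw [dif_neg hy]
          exact not_touches_sv n s u a y _ _ _ ha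
            (by rintro rfl; exact absurd hx (ne_of_gt h.2).symm)
      · next hx =>
        by_cases hy : y = u
        · erw [dif_pos hy]
          by_cases hx2 : x = a
          · erw [dif_pos hx2]; simp [touchesBranch, ha]
          · erw [dif_neg hx2]; exact not_touches_sv n s u a x _ _ _ ha hx
        · erw [dif_neg hy]; simp [touchesBranch, hx, hy]
  · rintro (w | ⟨⟨x, y, i⟩, h⟩) hnt
    · simp only [touchesBranch] at hnt
      simp [retr, hnt]; rfl
    · simp only [touchesBranch] at hnt
      push_neg at hnt
      simp [retr, hnt.1, hnt.2]; rfl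
  · have key : ∀ (w x y : Fin n) (i : Fin (s - 1))
        (h : (⊤ : SimpleGraph (Fin n)).Adj x y ∧ x < y),
        subdivAdj (⊤ : SimpleGraph (Fin n)) s (Sum.inl w) (Sum.inr ⟨(x, y, i), h⟩) →
        retr n s hs u a (Sum.inl w) = retr n s hs u a (Sum.inr ⟨(x, y, i), h⟩) ∨
        (subdivGraph (⊤ : SimpleGraph (Fin n)) s).Adj (retr n s hs u a (Sum.inl w))
          (retr n s hs u a (Sum.inr ⟨(x, y, i), h⟩)) := by
      rintro w x y i h (⟨rfl, hi0⟩ | ⟨rfl, hil⟩)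
      · -- w = x, (i : ℕ) = 0
        simp only [retr]
        by_cases hx : w = u
        · erw [if_pos hx, dif_pos hx]
          by_cases hy : y = a
          · erw [dif_pos hy]; exact Or.inl rfl
          · erw [dif_neg hy]; exact Or.inr (sv_adj_inl_left' n s a y _ _ _ hi0)
        · erw [if_neg hx, dif_neg hx]
          by_cases hy : y = u
          · erw [dif_pos hy]
            by_cases hx2 : w = a
            · erw [dif_pos hx2]; exact Or.inl (by rw [hx2])
            · erw [dif_neg hx2]
              exact Or.inr ((sv_adj_inl_right' n s a _ _ _ _ (by omega)).symm)
          · erw [dif_neg hy]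
            exact Or.inr (Or.inl ⟨rfl, hi0⟩)
      · -- w = y, (i : ℕ) = s - 2
        simp only [retr]
        by_cases hy : w = u
        · have hx : ¬ x = u := fun hxu => absurd h.2 (by rw [hxu, hy]; exact lt_irrefl u)
          erw [if_pos hy, dif_neg hx, dif_pos hy]
          by_cases hx2 : x = a
          · erw [dif_pos hx2]; exact Or.inl rfl
          · erw [dif_neg hx2]
            exact Or.inr (sv_adj_inl_left' n s a _ _ _ _ (by omega))
        · erw [if_neg hy]
          by_cases hx : x = u
          · erw [dif_pos hx]
            by_cases hy2 : w = a
            · erw [dif_pos hy2]; exact Or.inl (by rw [hy2])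
            · erw [dif_neg hy2]
              exact Or.inr ((sv_adj_inl_right' n s a _ _ _ _ hil).symm)
          · erw [dif_neg hx, dif_neg hy]
            exact Or.inr (Or.inr ⟨rfl, hil⟩)
    have key2 : ∀ (x y : Fin n) (i j : Fin (s - 1))
        (h h' : (⊤ : SimpleGraph (Fin n)).Adj x y ∧ x < y) (hij : (i : ℕ) + 1 = (j : ℕ)),
        retr n s hs u a (Sum.inr ⟨(x, y, i), h⟩) = retr n s hs u a (Sum.inr ⟨(x, y, j), h'⟩) ∨
        (subdivGraph (⊤ : SimpleGraph (Fin n)) s).Adj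
          (retr n s hs u a (Sum.inr ⟨(x, y, i), h⟩))
          (retr n s hs u a (Sum.inr ⟨(x, y, j), h'⟩)) := by
      intro x y i j h h' hij
      have hjlt := j.isLt
      simp only [retr]
      by_cases hx : x = u
      · erw [dif_pos hx, dif_pos hx]
        by_cases hy : y = a
        · erw [dif_pos hy, dif_pos hy]; exact Or.inl rfl
        · erw [dif_neg hy, dif_neg hy]
          exact Or.inr (sv_adj_succ n s a y _ _ _ _ _ hij)
      · erw [dif_neg hx, dif_neg hx]
        by_cases hy : y = u
        · erw [dif_pos hy, dif_pos hy]
          by_cases hx2 : x = a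
          · erw [dif_pos hx2, dif_pos hx2]; exact Or.inl rfl
          · erw [dif_neg hx2, dif_neg hx2]
            exact Or.inr ((sv_adj_succ n s a x (s - 2 - (j : ℕ)) (s - 2 - (i : ℕ)) _ _ _
              (by omega)).symm)
        · erw [dif_neg hy, dif_neg hy]
          exact Or.inr ⟨rfl, rfl, Or.inl hij⟩
    rintro (w | ⟨⟨x, y, i⟩, hxy⟩) (w' | ⟨⟨x', y', j⟩, hxy'⟩) hadj
    · exact absurd hadj.1 (by omega)
    · exact key w x' y' j hxy' hadj
    · exact (key w' x y i hxy hadj).imp Eq.symm fun hh => hh.symm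
    · obtain ⟨rfl, rfl, h3 | h3⟩ := hadj
      · exact key2 x y i j hxy hxy' h3
      · exact (key2 x y j i hxy' hxy h3).imp Eq.symm fun hh => hh.symm
end

section
/- Let P be the incidence graph of a finite projective plane of order q. If v is a vertex of P and w_1, …, w_q are q vertices of P, all distinct from v (but not necessarily distinct from each other), then v has a neighbor u in P such that dist_P(u, w_i) ≥ 2 for all i ∈ {1, …, q}. -/
open SimpleGraph

/-- The incidence graph of a point–line incidence geometry: one vertex for each point
and one for each line, a point-vertex being adjacent to a line-vertex iff the point
lies on the line. -/
def incidenceGraph (P L : Type*) [Membership P L] : SimpleGraph (P ⊕ L) where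
  Adj x y :=
    (∃ (p : P) (l : L), x = Sum.inl p ∧ y = Sum.inr l ∧ p ∈ l) ∨
    (∃ (p : P) (l : L), x = Sum.inr l ∧ y = Sum.inl p ∧ p ∈ l)
  symm := by
    constructor
    rintro x y (⟨p, l, h1, h2, h3⟩ | ⟨p, l, h1, h2, h3⟩)
    · exact Or.inr ⟨p, l, h2, h1, h3⟩
    · exact Or.inl ⟨p, l, h2, h1, h3⟩
  loopless := by
    constructor
    rintro x (⟨p, l, h1, h2, -⟩ | ⟨p, l, h1, h2, -⟩) <;> rw [h1] at h2 <;> exact absurd h2 (by simp)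

section Aux

variable {P L : Type*} [Membership P L]

lemma ig_adj_pl {p : P} {l : L} (h : p ∈ l) :
    (incidenceGraph P L).Adj (Sum.inl p) (Sum.inr l) :=
  Or.inl ⟨p, l, rfl, rfl, h⟩

variable [Fintype P] [Fintype L] [Configuration.ProjectivePlane P L]

lemma exists_mem_line (l : L) : ∃ p : P, p ∈ l := by
  have h := Configuration.ProjectivePlane.pointCount_eq P l
  have : Nat.card {p : P // p ∈ l} ≠ 0 := by
    rw [Configuration.pointCount] at h; omega
  obtain ⟨⟨p, hp⟩⟩ := Nat.card_ne_zero.mp this |>.1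
  exact ⟨p, hp⟩

lemma exists_mem_point (p : P) : ∃ l : L, p ∈ l := by
  have h := Configuration.ProjectivePlane.lineCount_eq L p
  have : Nat.card {l : L // p ∈ l} ≠ 0 := by
    rw [Configuration.lineCount] at h; omega
  obtain ⟨⟨l, hl⟩⟩ := Nat.card_ne_zero.mp this |>.1
  exact ⟨l, hl⟩

lemma ig_reach_pl (p : P) (l : L) :
    (incidenceGraph P L).Reachable (Sum.inl p) (Sum.inr l) := by
  by_cases h : p ∈ l
  · exact (ig_adj_pl h).reachable
  · obtain ⟨p', hp'⟩ := exists_mem_line (P := P) l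
    have hne : p ≠ p' := fun he => h (he ▸ hp')
    have hm := Configuration.HasLines.mkLine_ax (P := P) (L := L) hne
    exact ((ig_adj_pl hm.1).reachable.trans (ig_adj_pl hm.2).reachable.symm).trans
      (ig_adj_pl hp').reachable

lemma ig_preconnected : (incidenceGraph P L).Preconnected := by
  rintro (p | l) (p' | l')
  · by_cases h : p = p'
    · exact h ▸ Reachable.refl _
    · have hm := Configuration.HasLines.mkLine_ax (P := P) (L := L) h
      exact (ig_adj_pl hm.1).reachable.trans (ig_adj_pl hm.2).reachable.symm
  · exact ig_reach_pl p l'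
  · exact (ig_reach_pl p' l).symm
  · by_cases h : l = l'
    · exact h ▸ Reachable.refl _
    · have hm := Configuration.HasPoints.mkPoint_ax (P := P) (L := L) h
      exact (ig_adj_pl hm.1).reachable.symm.trans (ig_adj_pl hm.2).reachable

end Aux

/-- In the incidence graph of a finite projective plane of order `q`, for every vertex `v`
and every list `w 0, …, w (q-1)` of `q` vertices all distinct from `v` (but not necessarily
distinct from each other), `v` has a neighbor `u` at distance at least `2` from every `w i`. -/
theorem statement11 (q : ℕ) (P L : Type*) [Membership P L]
    [Fintype P] [Fintype L] [Configuration.ProjectivePlane P L]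
    (horder : Configuration.ProjectivePlane.order P L = q)
    (v : P ⊕ L) (w : Fin q → P ⊕ L) (hw : ∀ i, w i ≠ v) :
    ∃ u, (incidenceGraph P L).Adj v u ∧
      ∀ i, 2 ≤ (incidenceGraph P L).dist u (w i) := by
  by_contra hcon
  push_neg at hcon
  -- `hcon : ∀ u, Adj v u → ∃ i, dist u (w i) < 2`
  -- convert "dist < 2" into structural info
  have key : ∀ u, (incidenceGraph P L).Adj v u → ∃ i,
      u = w i ∨ (incidenceGraph P L).Adj u (w i) := by
    intro u hu
    obtain ⟨i, hi⟩ := hcon u hu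
    refine ⟨i, ?_⟩
    interval_cases h : (incidenceGraph P L).dist u (w i)
    · exact Or.inl ((ig_preconnected u (w i)).dist_eq_zero_iff.mp h)
    · exact Or.inr (SimpleGraph.dist_eq_one_iff_adj.mp h)
  obtain (p | l) := v
  · -- v is a point p; neighbors are lines through p
    have step : ∀ l : L, p ∈ l → ∃ i,
        w i = Sum.inr l ∨ ∃ p' : P, w i = Sum.inl p' ∧ p' ∈ l := by
      intro l hl
      obtain ⟨i, hi | hi⟩ := key (Sum.inr l) (ig_adj_pl hl)
      · exact ⟨i, Or.inl hi.symm⟩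
      · rcases hi with ⟨p0, l0, h1, h2, h3⟩ | ⟨p0, l0, h1, h2, h3⟩
        · exact absurd h1 (by simp)
        · rw [Sum.inr.injEq] at h1
          exact ⟨i, Or.inr ⟨p0, h2, h1 ▸ h3⟩⟩
    let f : {l : L // p ∈ l} → Fin q := fun l => (step l.1 l.2).choose
    have finj : Function.Injective f := by
      rintro ⟨l1, hl1⟩ ⟨l2, hl2⟩ hf
      have h1 := (step l1 hl1).choose_spec
      have h2 := (step l2 hl2).choose_spec
      simp only [f] at hf
      rw [hf] at h1
      ext
      rcases h1 with h1 | ⟨p1, hp1, hp1'⟩ <;> rcases h2 with h2 | ⟨p2, hp2, hp2'⟩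
      · rw [h1, Sum.inr.injEq] at h2; exact h2
      · rw [h1] at hp2; exact absurd hp2 (by simp)
      · rw [h2] at hp1; exact absurd hp1 (by simp)
      · rw [hp1, Sum.inl.injEq] at hp2
        subst hp2
        have hne : p1 ≠ p := fun he => hw _ (by rw [hp1, he])
        exact (Configuration.Nondegenerate.eq_or_eq hp1' hl1 hp2' hl2).resolve_left hne
    have hcard : Nat.card {l : L // p ∈ l} ≤ Nat.card (Fin q) :=
      Nat.card_le_card_of_injective f finj
    have hlc := Configuration.ProjectivePlane.lineCount_eq L p
    rw [Configuration.lineCount, horder] at hlc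
    simp [hlc] at hcard
  · -- v is a line l; neighbors are points on l
    have step : ∀ p : P, p ∈ l → ∃ i,
        w i = Sum.inl p ∨ ∃ l' : L, w i = Sum.inr l' ∧ p ∈ l' := by
      intro p hp
      obtain ⟨i, hi | hi⟩ := key (Sum.inl p) ((ig_adj_pl hp).symm)
      · exact ⟨i, Or.inl hi.symm⟩
      · rcases hi with ⟨p0, l0, h1, h2, h3⟩ | ⟨p0, l0, h1, h2, h3⟩
        · rw [Sum.inl.injEq] at h1
          exact ⟨i, Or.inr ⟨l0, h2, h1 ▸ h3⟩⟩
        · exact absurd h1 (by simp)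
    let f : {p : P // p ∈ l} → Fin q := fun p => (step p.1 p.2).choose
    have finj : Function.Injective f := by
      rintro ⟨p1, hp1⟩ ⟨p2, hp2⟩ hf
      have h1 := (step p1 hp1).choose_spec
      have h2 := (step p2 hp2).choose_spec
      simp only [f] at hf
      rw [hf] at h1
      ext
      rcases h1 with h1 | ⟨l1, hl1, hl1'⟩ <;> rcases h2 with h2 | ⟨l2, hl2, hl2'⟩
      · rw [h1, Sum.inl.injEq] at h2; exact h2
      · rw [h1] at hl2; exact absurd hl2 (by simp)
      · rw [h2] at hl1; exact absurd hl1 (by simp)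
      · rw [hl1, Sum.inr.injEq] at hl2
        subst hl2
        have hne : l1 ≠ l := fun he => hw _ (by rw [hl1, he])
        exact (Configuration.Nondegenerate.eq_or_eq hl1' hl2' hp1 hp2).resolve_right hne
    have hcard : Nat.card {p : P // p ∈ l} ≤ Nat.card (Fin q) :=
      Nat.card_le_card_of_injective f finj
    have hpc := Configuration.ProjectivePlane.pointCount_eq P l
    rw [Configuration.pointCount, horder] at hpc
    simp [hpc] at hcard
end
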